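/- arXiv:2211.03893 — 8 statements merged into one kernel-verified Lean document; each statement's English description precedes it below -/
import Mathlib

section
/- Let $(U,\mathcal{W})$ be a set cover instance (each set in $\mathcal{W}$ is a subset of $U$, and for each $u\in U$ the singleton $\{u\}$ is in $\mathcal{W}$). Define the graph $H$ on vertex set $U$ where $u$ and $u'$ are adjacent iff some set $W\in\mathcal{W}$ contains both $u$ and $u'$. Then for any maximal matching $M$ in $H$, $(|U| - \mathrm{SC}(U,\mathcal{W}))/2 \le |M| \le |U| - \mathrm{SC}(U,\mathcal{W})$, where $\mathrm{SC}(U,\mathcal{W})$ denotes the minimum size of a subcollection of $\mathcal{W}$ whose union is $U$. -/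
/-!
Let `V` be the set of vertices matched by `M`, so `|V| = 2|M|`. The edges of `M`, each inside
some set of `𝒲`, together with the singletons of the unmatched vertices give a cover of size
`|M| + (|U| - 2|M|) = |U| - |M|`, whence `|M| ≤ |U| - SC`. Conversely, by maximality the
unmatched vertices are pairwise non-adjacent in `H`, so every set of a minimum cover contains
at most one of them: `|U| - 2|M| ≤ SC`.
-/

open Finset

section SetCover

variable {α : Type*}

def IsSetCover (U : Finset α) (C : Finset (Finset α)) : Prop :=
  ∀ u ∈ U, ∃ W ∈ C, u ∈ W

theorem IsSetCover.exists_subcover_card_le {U : Finset α} {P 𝒲 : Finset (Finset α)}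
    (hP : IsSetCover U P) (hrefine : ∀ p ∈ P, ∃ W ∈ 𝒲, p ⊆ W) :
    ∃ C ⊆ 𝒲, IsSetCover U C ∧ #C ≤ #P := by
  classical
  choose! f hf𝒲 hpf using hrefine
  refine ⟨P.image f, ?_, ?_, card_image_le⟩
  · intro W hW
    obtain ⟨p, hp, rfl⟩ := mem_image.1 hW
    exact hf𝒲 p hp
  · intro u hu
    obtain ⟨p, hp, hup⟩ := hP u hu
    exact ⟨f p, mem_image_of_mem f hp, hpf p hp hup⟩

theorem IsSetCover.card_le_of_subsingleton_inter {U S : Finset α} {C : Finset (Finset α)}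
    (hC : IsSetCover U C) (hSU : S ⊆ U)
    (hS : ∀ W ∈ C, ({x ∈ S | x ∈ W} : Set α).Subsingleton) : #S ≤ #C :=
  card_le_card_of_forall_subsingleton (· ∈ ·) (fun x hx => hC x (hSU hx)) hS

section Matching

variable [DecidableEq α] (M : Finset (Sym2 α))

def matchedVertices : Finset α :=
  M.biUnion Sym2.toFinset

variable {M}

theorem mem_matchedVertices {x : α} : x ∈ matchedVertices M ↔ ∃ e ∈ M, x ∈ e := by
  simp only [matchedVertices, mem_biUnion, Sym2.mem_toFinset]

theorem card_matchedVertices (hdiag : ∀ e ∈ M, ¬e.IsDiag)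
    (hdisj : ∀ e ∈ M, ∀ e' ∈ M, e ≠ e' → ∀ x : α, x ∈ e → x ∉ e') :
    #(matchedVertices M) = 2 * #M := by
  rw [matchedVertices, card_biUnion, sum_congr rfl fun e he => Sym2.card_toFinset_of_not_isDiag e
    (hdiag e he), sum_const, smul_eq_mul, mul_comm]
  intro e he e' he' hne
  exact disjoint_left.2 fun x hx hx' =>
    hdisj e he e' he' hne x (Sym2.mem_toFinset.1 hx) (Sym2.mem_toFinset.1 hx')

theorem exists_setCover_card_le_card_add_card_unmatched {U : Finset α} {𝒲 : Finset (Finset α)}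
    (hsing : ∀ u ∈ U, ({u} : Finset α) ∈ 𝒲) (hM : ∀ e ∈ M, ∃ W ∈ 𝒲, ∀ x ∈ e, x ∈ W) :
    ∃ C ⊆ 𝒲, IsSetCover U C ∧ #C ≤ #M + #(U \ matchedVertices M) := by
  set P := M.image Sym2.toFinset ∪ (U \ matchedVertices M).image ({·})
  have hP : IsSetCover U P := by
    intro u hu
    by_cases hmatched : u ∈ matchedVertices M
    · obtain ⟨e, he, hue⟩ := mem_matchedVertices.1 hmatched
      exact ⟨e.toFinset, mem_union_left _ (mem_image_of_mem _ he), Sym2.mem_toFinset.2 hue⟩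
    · exact ⟨{u}, mem_union_right _ (mem_image_of_mem _ (mem_sdiff.2 ⟨hu, hmatched⟩)),
        mem_singleton_self u⟩
  have hrefine : ∀ p ∈ P, ∃ W ∈ 𝒲, p ⊆ W := by
    intro p hp
    rcases mem_union.1 hp with hp | hp
    · obtain ⟨e, he, rfl⟩ := mem_image.1 hp
      obtain ⟨W, hW, heW⟩ := hM e he
      exact ⟨W, hW, fun x hx => heW x (Sym2.mem_toFinset.1 hx)⟩
    · obtain ⟨u, hu, rfl⟩ := mem_image.1 hp
      exact ⟨{u}, hsing u (mem_sdiff.1 hu).1, subset_rfl⟩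
  obtain ⟨C, hC𝒲, hC, hCP⟩ := hP.exists_subcover_card_le hrefine
  exact ⟨C, hC𝒲, hC, hCP.trans ((card_union_le _ _).trans (add_le_add card_image_le card_image_le))⟩

theorem subsingleton_unmatched_inter {U W : Finset α}
    (hmax : ∀ u v : α, u ∈ U → v ∈ U → u ≠ v → u ∈ W → v ∈ W → ∃ e ∈ M, u ∈ e ∨ v ∈ e) :
    ({x ∈ U \ matchedVertices M | x ∈ W} : Set α).Subsingleton := by
  rintro u ⟨hu, huW⟩ v ⟨hv, hvW⟩
  simp only [mem_sdiff, mem_matchedVertices, not_exists, not_and] at hu hv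
  by_contra hne
  obtain ⟨e, he, hue | hve⟩ := hmax u v hu.1 hv.1 hne huW hvW
  · exact hu.2 e he hue
  · exact hv.2 e he hve

end Matching

end SetCover

theorem stmt0_general {α : Type*} (U : Finset α) (𝒲 : Finset (Finset α))
    (hsing : ∀ u ∈ U, ({u} : Finset α) ∈ 𝒲)
    (sc : ℕ)
    (hsc : IsLeast {n : ℕ | ∃ C ⊆ 𝒲, (∀ u ∈ U, ∃ W ∈ C, u ∈ W) ∧ C.card = n} sc)
    (M : Finset (Sym2 α))
    (hedge : ∀ e ∈ M, ∃ u v : α, u ∈ U ∧ v ∈ U ∧ u ≠ v ∧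
      (∃ W ∈ 𝒲, u ∈ W ∧ v ∈ W) ∧ e = s(u, v))
    (hdisj : ∀ e ∈ M, ∀ e' ∈ M, e ≠ e' → ∀ x : α, x ∈ e → x ∉ e')
    (hmax : ∀ u v : α, u ∈ U → v ∈ U → u ≠ v → (∃ W ∈ 𝒲, u ∈ W ∧ v ∈ W) →
      ∃ e ∈ M, u ∈ e ∨ v ∈ e) :
    U.card - sc ≤ 2 * M.card ∧ M.card ≤ U.card - sc := by
  classical
  have hVU : matchedVertices M ⊆ U := by
    intro x hx
    obtain ⟨e, he, hxe⟩ := mem_matchedVertices.1 hx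
    obtain ⟨u, v, hu, hv, -, -, rfl⟩ := hedge e he
    rcases Sym2.mem_iff.1 hxe with rfl | rfl <;> assumption
  have hV : #(matchedVertices M) = 2 * #M := by
    refine card_matchedVertices (fun e he => ?_) hdisj
    obtain ⟨u, v, -, -, huv, -, rfl⟩ := hedge e he
    exact Sym2.mk_isDiag_iff.not.2 huv
  have hM𝒲 : ∀ e ∈ M, ∃ W ∈ 𝒲, ∀ x ∈ e, x ∈ W := by
    intro e he
    obtain ⟨u, v, -, -, -, ⟨W, hW, huW, hvW⟩, rfl⟩ := hedge e he
    exact ⟨W, hW, fun x hx => by rcases Sym2.mem_iff.1 hx with rfl | rfl <;> assumption⟩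
  obtain ⟨C, hC𝒲, hC, hCcard⟩ := exists_setCover_card_le_card_add_card_unmatched hsing hM𝒲
  have hupper : sc ≤ #C := hsc.2 ⟨C, hC𝒲, hC, rfl⟩
  obtain ⟨C₀, hC₀𝒲, hC₀, rfl⟩ := hsc.1
  have hlower : #(U \ matchedVertices M) ≤ #C₀ :=
    (show IsSetCover U C₀ from hC₀).card_le_of_subsingleton_inter sdiff_subset fun W hW =>
      subsingleton_unmatched_inter fun u v hu hv huv huW hvW =>
        hmax u v hu hv huv ⟨W, hC₀𝒲 hW, huW, hvW⟩
  rw [card_sdiff_of_subset hVU] at hCcard hlower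
  have := card_le_card hVU
  omega

/-- Set cover vs. maximal matching: for a set cover instance `(U, 𝒲)` containing all
singletons, and the graph `H` on `U` joining two elements iff some set of `𝒲` contains
both, every maximal matching `M` of `H` satisfies
`(|U| - SC)/2 ≤ |M| ≤ |U| - SC`, where `SC` is the minimum set cover size. -/
theorem stmt0 {α : Type*} [DecidableEq α] (U : Finset α) (𝒲 : Finset (Finset α))
    (hsub : ∀ W ∈ 𝒲, W ⊆ U)
    (hsing : ∀ u ∈ U, ({u} : Finset α) ∈ 𝒲)
    (sc : ℕ)
    (hsc : IsLeast {n : ℕ | ∃ C ⊆ 𝒲, (∀ u ∈ U, ∃ W ∈ C, u ∈ W) ∧ C.card = n} sc)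
    (M : Finset (Sym2 α))
    (hedge : ∀ e ∈ M, ∃ u v : α, u ∈ U ∧ v ∈ U ∧ u ≠ v ∧
      (∃ W ∈ 𝒲, u ∈ W ∧ v ∈ W) ∧ e = s(u, v))
    (hdisj : ∀ e ∈ M, ∀ e' ∈ M, e ≠ e' → ∀ x : α, x ∈ e → x ∉ e')
    (hmax : ∀ u v : α, u ∈ U → v ∈ U → u ≠ v → (∃ W ∈ 𝒲, u ∈ W ∧ v ∈ W) →
      ∃ e ∈ M, u ∈ e ∨ v ∈ e) :
    U.card - sc ≤ 2 * M.card ∧ M.card ≤ U.card - sc :=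
  stmt0_general U 𝒲 hsing sc hsc M hedge hdisj hmax
end

section
/- Let $H = H_1 \cup H_2$ be a graph on a common vertex set that is the union of two graphs $H_1$ and $H_2$ (on the same vertex set). Let $M_1$ be a maximal matching in $H_1$ and $M_2$ a maximal matching in $H_2$. Then there exists a maximal matching $M$ of $H$ with $(|M_1| + |M_2|)/2 \le |M| \le |M_1| + |M_2|$. -/
/-- `M` is a matching of the simple graph `G`, represented as a finite set of edges. -/
def IsMatchingOf {V : Type*} (G : SimpleGraph V) (M : Finset (Sym2 V)) : Prop :=
  (∀ e ∈ M, e ∈ G.edgeSet) ∧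
  ∀ e ∈ M, ∀ e' ∈ M, e ≠ e' → ∀ x : V, x ∈ e → x ∉ e'

/-- `M` is a maximal matching of `G`: no edge of `G` can be added to `M`. -/
def IsMaximalMatchingOf {V : Type*} (G : SimpleGraph V) (M : Finset (Sym2 V)) : Prop :=
  IsMatchingOf G M ∧ ∀ u v : V, G.Adj u v → ∃ e ∈ M, u ∈ e ∨ v ∈ e

/-- Any matching extends to a maximal matching. -/
lemma extend_to_maximal {V : Type*} [Fintype V] [DecidableEq V] (G : SimpleGraph V)
    (N : Finset (Sym2 V)) (hN : IsMatchingOf G N) :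
    ∃ M, N ⊆ M ∧ IsMaximalMatchingOf G M := by
  classical
  set S : Finset (Finset (Sym2 V)) :=
    (G.edgeFinset.powerset).filter (fun M => N ⊆ M ∧ IsMatchingOf G M) with hS
  have hNS : N ∈ S := by
    rw [hS, Finset.mem_filter, Finset.mem_powerset]
    refine ⟨fun e he => ?_, Finset.Subset.refl _, hN⟩
    rw [SimpleGraph.mem_edgeFinset]
    exact hN.1 e he
  obtain ⟨M, hMS, hmax⟩ := S.exists_max_image Finset.card ⟨N, hNS⟩
  rw [hS, Finset.mem_filter, Finset.mem_powerset] at hMS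
  obtain ⟨hMedge, hNM, hMmatch⟩ := hMS
  refine ⟨M, hNM, hMmatch, ?_⟩
  intro u v hadj
  by_contra hcon
  push_neg at hcon
  have hall : ∀ e ∈ M, u ∉ e ∧ v ∉ e := hcon
  have huv : s(u, v) ∉ M := fun h => (hall _ h).1 (Sym2.mem_mk_left u v)
  have hmem : (insert s(u,v) M) ∈ S := by
    rw [hS, Finset.mem_filter, Finset.mem_powerset]
    refine ⟨?_, hNM.trans (Finset.subset_insert _ _), ?_, ?_⟩
    · intro e he
      rcases Finset.mem_insert.1 he with h | h
      · rw [h, SimpleGraph.mem_edgeFinset, SimpleGraph.mem_edgeSet]; exact hadj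
      · exact hMedge h
    · intro e he
      rcases Finset.mem_insert.1 he with h | h
      · rw [h, SimpleGraph.mem_edgeSet]; exact hadj
      · exact hMmatch.1 e h
    · intro e he e' he' hne x hx
      rcases Finset.mem_insert.1 he with h | h <;>
        rcases Finset.mem_insert.1 he' with h' | h'
      · exact absurd (h.trans h'.symm) hne
      · subst h
        rcases Sym2.mem_iff.1 hx with rfl | rfl
        · exact (hall _ h').1
        · exact (hall _ h').2
      · subst h'
        intro hx'
        rcases Sym2.mem_iff.1 hx' with rfl | rfl
        · exact (hall _ h).1 hx
        · exact (hall _ h).2 hx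
      · exact hMmatch.2 e h e' h' hne x hx
  have := hmax _ hmem
  rw [Finset.card_insert_of_notMem huv] at this
  omega

/-- Core lemma assuming `M2.card ≤ M1.card`. -/
lemma core {V : Type*} [Fintype V] [DecidableEq V] (H1 H2 : SimpleGraph V)
    (M1 M2 : Finset (Sym2 V))
    (h1 : IsMaximalMatchingOf H1 M1) (h2 : IsMaximalMatchingOf H2 M2)
    (hle : M2.card ≤ M1.card) :
    ∃ M : Finset (Sym2 V), IsMaximalMatchingOf (H1 ⊔ H2) M ∧
      M1.card + M2.card ≤ 2 * M.card ∧ M.card ≤ M1.card + M2.card := by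
  classical
  set A : Finset (Sym2 V) := M2.filter (fun e => ∀ f ∈ M1, ∀ x ∈ e, x ∉ f) with hA
  have hAM2 : A ⊆ M2 := Finset.filter_subset _ _
  have hM1A : Disjoint M1 A := by
    rw [Finset.disjoint_right]
    intro e heA heM1
    exact (Finset.mem_filter.1 heA).2 e heM1 e.out.1 (Sym2.out_fst_mem e) (Sym2.out_fst_mem e)
  set M0 : Finset (Sym2 V) := M1 ∪ A with hM0
  have hM0match : IsMatchingOf (H1 ⊔ H2) M0 := by
    constructor
    · intro e he
      rw [SimpleGraph.edgeSet_sup]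
      rcases Finset.mem_union.1 he with h | h
      · exact Or.inl (h1.1.1 e h)
      · exact Or.inr (h2.1.1 e (hAM2 h))
    · intro e he e' he' hne x hx
      rcases Finset.mem_union.1 he with h | h <;>
        rcases Finset.mem_union.1 he' with h' | h'
      · exact h1.1.2 e h e' h' hne x hx
      · intro hx'
        exact (Finset.mem_filter.1 h').2 e h x hx' hx
      · exact (Finset.mem_filter.1 h).2 e' h' x hx
      · exact h2.1.2 e (hAM2 h) e' (hAM2 h') hne x hx
  obtain ⟨M, hM0M, hMmax⟩ := extend_to_maximal (H1 ⊔ H2) M0 hM0match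
  refine ⟨M, hMmax, ?_, ?_⟩
  · have : M1.card ≤ M.card :=
      Finset.card_le_card ((Finset.subset_union_left).trans hM0M)
    omega
  -- upper bound
  have hMmatch := hMmax.1
  have hnotM0 : ∀ e ∈ M \ M0, ∀ g ∈ M0, ∀ x ∈ e, x ∉ g := by
    intro e he g hg x hx
    have heM := (Finset.mem_sdiff.1 he).1
    have heM0 := (Finset.mem_sdiff.1 he).2
    exact hMmatch.2 e heM g (hM0M hg) (fun h => heM0 (h ▸ hg)) x hx
  -- each extension edge meets a unique edge of M2 \ A
  have hPX : ∀ e ∈ M \ M0, ∃ f, f ∈ M2 \ A ∧ ∃ w, w ∈ f ∧ w ∈ e := by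
    intro e
    induction e using Sym2.ind with
    | _ u v =>
      intro he
      have heM := (Finset.mem_sdiff.1 he).1
      have hedge : s(u,v) ∈ (H1 ⊔ H2).edgeSet := hMmatch.1 _ heM
      rw [SimpleGraph.edgeSet_sup] at hedge
      rcases hedge with h | h
      · exfalso
        obtain ⟨g, hg, hug⟩ := h1.2 u v (H1.mem_edgeSet.1 h)
        have hgM0 : g ∈ M0 := Finset.mem_union_left _ hg
        rcases hug with hu | hv
        · exact hnotM0 _ he g hgM0 u (Sym2.mem_mk_left u v) hu
        · exact hnotM0 _ he g hgM0 v (Sym2.mem_mk_right u v) hv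
      · obtain ⟨f, hf, huf⟩ := h2.2 u v (H2.mem_edgeSet.1 h)
        have hfA : f ∉ A := by
          intro hfA
          have hfM0 : f ∈ M0 := Finset.mem_union_right _ hfA
          rcases huf with hu | hv
          · exact hnotM0 _ he f hfM0 u (Sym2.mem_mk_left u v) hu
          · exact hnotM0 _ he f hfM0 v (Sym2.mem_mk_right u v) hv
        refine ⟨f, Finset.mem_sdiff.2 ⟨hf, hfA⟩, ?_⟩
        rcases huf with hu | hv
        · exact ⟨u, hu, Sym2.mem_mk_left u v⟩
        · exact ⟨v, hv, Sym2.mem_mk_right u v⟩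
  have hcard : (M \ M0).card ≤ (M2 \ A).card := by
    set φ : Sym2 V → Sym2 V := fun e =>
      if h : ∃ f, f ∈ M2 \ A ∧ ∃ w, w ∈ f ∧ w ∈ e then h.choose else e with hφ
    apply Finset.card_le_card_of_injOn φ
    · intro e he
      simp only [Finset.mem_coe] at he ⊢
      have h := hPX e he
      rw [hφ]
      simp only [dif_pos h]
      exact h.choose_spec.1
    · intro e he e' he' heq
      simp only [Finset.mem_coe] at he he'
      have h := hPX e he
      have h' := hPX e' he'
      rw [hφ] at heq
      simp only [dif_pos h, dif_pos h'] at heq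
      obtain ⟨hfmem, w, hwf, hwe⟩ := h.choose_spec
      obtain ⟨hfmem', w', hwf', hwe'⟩ := h'.choose_spec
      set f := h.choose
      rw [← heq] at hwf' hfmem'
      -- f ∉ A, so f meets M1
      have hfM2 := (Finset.mem_sdiff.1 hfmem).1
      have hfA := (Finset.mem_sdiff.1 hfmem).2
      have : ¬ ∀ g ∈ M1, ∀ x ∈ f, x ∉ g := by
        intro hcon
        exact hfA (Finset.mem_filter.2 ⟨hfM2, hcon⟩)
      push_neg at this
      obtain ⟨g, hg, x, hxf, hxg⟩ := this
      have hgM0 : g ∈ M0 := Finset.mem_union_left _ hg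
      have hwx : w ≠ x := fun hh => hnotM0 e he g hgM0 w hwe (hh ▸ hxg)
      have hwx' : w' ≠ x := fun hh => hnotM0 e' he' g hgM0 w' hwe' (hh ▸ hxg)
      -- f = s(w, x), and w' ∈ f with w' ≠ x forces w' = w
      have hf_eq : f = s(w, x) := ((Sym2.mem_and_mem_iff hwx).1 ⟨hwf, hxf⟩)
      have hww' : w' = w := by
        rw [hf_eq] at hwf'
        rcases Sym2.mem_iff.1 hwf' with hh | hh
        · exact hh
        · exact absurd hh hwx'
      -- w ∈ e and w ∈ e', e, e' ∈ M, matching forces e = e'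
      by_contra hne
      exact hMmatch.2 e (Finset.mem_sdiff.1 he).1 e' (Finset.mem_sdiff.1 he').1 hne w hwe
        (hww' ▸ hwe')
  have e1 : (M \ M0).card + M0.card = M.card := Finset.card_sdiff_add_card_eq_card hM0M
  have e2 : M0.card = M1.card + A.card := Finset.card_union_of_disjoint hM1A
  have e3 : (M2 \ A).card + A.card = M2.card := Finset.card_sdiff_add_card_eq_card hAM2
  omega

/-- If `M₁` and `M₂` are maximal matchings of `H₁` and `H₂` (graphs on a common vertex
set), then the union graph `H₁ ⊔ H₂` has a maximal matching `M` with
`(|M₁| + |M₂|)/2 ≤ |M| ≤ |M₁| + |M₂|`. -/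
theorem stmt1 {V : Type*} [Fintype V] [DecidableEq V] (H1 H2 : SimpleGraph V)
    (M1 M2 : Finset (Sym2 V))
    (h1 : IsMaximalMatchingOf H1 M1) (h2 : IsMaximalMatchingOf H2 M2) :
    ∃ M : Finset (Sym2 V), IsMaximalMatchingOf (H1 ⊔ H2) M ∧
      M1.card + M2.card ≤ 2 * M.card ∧ M.card ≤ M1.card + M2.card := by
  rcases le_total M2.card M1.card with h | h
  · exact core H1 H2 M1 M2 h1 h2 h
  · obtain ⟨M, hM, hb1, hb2⟩ := core H2 H1 M2 M1 h2 h1 h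
    rw [sup_comm] at hM
    exact ⟨M, hM, by omega, by omega⟩
end

section
/- Let $H=(A,B,E)$ be a bipartite graph with $|A|=a$, $|B|=b$, $b > 10a$, and every vertex of $A$ has degree at least $2b/3$. Then for every edge $e\in E$, the number of $A$-perfect matchings of $H$ containing $e$ is at most $2/b$ times the total number of $A$-perfect matchings of $H$. -/
/-- `M` is an `A`-perfect matching of the bipartite graph with edge set `E`:
a subset of the edges, no two sharing an endpoint on either side, covering all of `A`. -/
def IsAPerfectMatching {α : Type*} (A : Finset α) (E M : Finset (α × α)) : Prop :=
  M ⊆ E ∧ (∀ p ∈ M, ∀ q ∈ M, p ≠ q → p.1 ≠ q.1 ∧ p.2 ≠ q.2) ∧ ∀ a ∈ A, ∃ p ∈ M, p.1 = a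

/- In a bipartite graph `H = (A, B, E)` with `|A| = a`, `|B| = b`, `b > 10a`, where
every vertex of `A` has degree at least `2b/3`, for every edge `e ∈ E` the number of
`A`-perfect matchings containing `e` is at most `2/b` times the total number of
`A`-perfect matchings. -/
open Classical in
theorem stmt2 {α : Type*} [DecidableEq α] (A B : Finset α) (hAB : Disjoint A B)
    (E : Finset (α × α)) (hE : ∀ p ∈ E, p.1 ∈ A ∧ p.2 ∈ B)
    (a b : ℕ) (ha : A.card = a) (hb : B.card = b) (hba : 10 * a < b)
    (hdeg : ∀ x ∈ A, 2 * b ≤ 3 * (E.filter (fun p => p.1 = x)).card) :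
    ∀ e ∈ E,
      b * ((E.powerset.filter (fun M => IsAPerfectMatching A E M ∧ e ∈ M)).card) ≤
        2 * ((E.powerset.filter (fun M => IsAPerfectMatching A E M)).card) := by
  classical
  intro e he
  obtain ⟨hx, hy⟩ := hE e he
  set x := e.1 with hxdef
  set S := E.powerset.filter (fun M => IsAPerfectMatching A E M ∧ e ∈ M) with hSdef
  set T := E.powerset.filter (fun M => IsAPerfectMatching A E M) with hTdef
  set D := E.filter (fun p => p.1 = x) with hDdef
  -- facts about each M ∈ S
  have hSmem : ∀ M ∈ S, IsAPerfectMatching A E M ∧ e ∈ M := by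
    intro M hM
    exact (Finset.mem_filter.mp hM).2
  -- the set of valid swap edges
  set V : Finset (α × α) → Finset (α × α) :=
    fun M => D.filter (fun p => ∀ q ∈ M.erase e, q.2 ≠ p.2) with hVdef
  set F : Finset (α × α) → Finset (Finset (α × α)) :=
    fun M => (V M).image (fun p => insert p (M.erase e)) with hFdef
  -- basic: elements of M.erase e have first coord ≠ x
  have herase1 : ∀ M ∈ S, ∀ q ∈ M.erase e, q.1 ≠ x := by
    intro M hM q hq
    obtain ⟨⟨hME, hmatch, hcov⟩, heM⟩ := hSmem M hM
    obtain ⟨hqe, hqM⟩ := Finset.mem_erase.mp hq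
    exact fun hqx => ((hmatch q hqM e heM hqe).1 hqx)
  -- recovery: filter of an element of F M gives back M.erase e
  have hrec : ∀ M ∈ S, ∀ p ∈ V M,
      (insert p (M.erase e)).filter (fun q => q.1 ≠ x) = M.erase e := by
    intro M hM p hp
    have hpx : p.1 = x := (Finset.mem_filter.mp ((Finset.mem_filter.mp hp).1)).2
    ext q
    simp only [Finset.mem_filter, Finset.mem_insert]
    constructor
    · rintro ⟨(rfl | hq), hqx⟩
      · exact absurd hpx hqx
      · exact hq
    · intro hq
      exact ⟨Or.inr hq, herase1 M hM q hq⟩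
  -- each F M ⊆ T
  have hFT : ∀ M ∈ S, F M ⊆ T := by
    intro M hM N hN
    obtain ⟨p, hp, rfl⟩ := Finset.mem_image.mp hN
    obtain ⟨⟨hME, hmatch, hcov⟩, heM⟩ := hSmem M hM
    have hpD := (Finset.mem_filter.mp hp).1
    have hpE : p ∈ E := (Finset.mem_filter.mp hpD).1
    have hpx : p.1 = x := (Finset.mem_filter.mp hpD).2
    have hpavoid : ∀ q ∈ M.erase e, q.2 ≠ p.2 := (Finset.mem_filter.mp hp).2
    rw [hTdef, Finset.mem_filter, Finset.mem_powerset]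
    have hsub : insert p (M.erase e) ⊆ E := by
      intro q hq
      rcases Finset.mem_insert.mp hq with rfl | hq
      · exact hpE
      · exact hME (Finset.mem_of_mem_erase hq)
    refine ⟨hsub, hsub, ?_, ?_⟩
    · -- matching property
      intro r hr s hs hrs
      rcases Finset.mem_insert.mp hr with hr1 | hr2
      · rcases Finset.mem_insert.mp hs with hs1 | hs2
        · exact absurd (hr1.trans hs1.symm) hrs
        · subst hr1
          exact ⟨fun h => herase1 M hM s hs2 (h ▸ hpx),
            fun h => hpavoid s hs2 h.symm⟩
      · rcases Finset.mem_insert.mp hs with hs1 | hs2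
        · subst hs1
          exact ⟨fun h => herase1 M hM r hr2 (h.trans hpx),
            fun h => hpavoid r hr2 h⟩
        · exact hmatch r (Finset.mem_of_mem_erase hr2) s (Finset.mem_of_mem_erase hs2) hrs
    · -- covers A
      intro a' ha'
      obtain ⟨r, hrM, hr1⟩ := hcov a' ha'
      by_cases hre : r = e
      · exact ⟨p, Finset.mem_insert_self _ _, by rw [hpx, hxdef, ← hre]; exact hr1⟩
      · exact ⟨r, Finset.mem_insert_of_mem (Finset.mem_erase.mpr ⟨hre, hrM⟩), hr1⟩
  -- card of F M = card of V M
  have hFcard : ∀ M ∈ S, (F M).card = (V M).card := by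
    intro M hM
    apply Finset.card_image_of_injOn
    intro p hp p' hp' hpp'
    dsimp only at hpp'
    have hpx : p.1 = x := (Finset.mem_filter.mp ((Finset.mem_filter.mp hp).1)).2
    have hp'x : p'.1 = x := (Finset.mem_filter.mp ((Finset.mem_filter.mp hp').1)).2
    have : p ∈ insert p' (M.erase e) := by
      rw [← hpp']; exact Finset.mem_insert_self p (M.erase e)
    rcases Finset.mem_insert.mp this with h | h
    · exact h
    · exact absurd hpx (herase1 M hM p h)
  -- pairwise disjoint
  have hdisj : ∀ M ∈ S, ∀ M' ∈ S, M ≠ M' → Disjoint (F M) (F M') := by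
    intro M hM M' hM' hMM'
    rw [Finset.disjoint_left]
    intro N hN hN'
    obtain ⟨p, hp, hpe⟩ := Finset.mem_image.mp hN
    obtain ⟨p', hp', hpe'⟩ := Finset.mem_image.mp hN'
    have h1 := hrec M hM p hp
    have h2 := hrec M' hM' p' hp'
    rw [hpe] at h1
    rw [hpe'] at h2
    have hkey : M.erase e = M'.erase e := h1.symm.trans h2
    have heM : e ∈ M := (hSmem M hM).2
    have heM' : e ∈ M' := (hSmem M' hM').2
    apply hMM'
    rw [← Finset.insert_erase heM, ← Finset.insert_erase heM', hkey]
  -- D.card + 1 ≤ (V M).card + a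
  have hVcard : ∀ M ∈ S, D.card + 1 ≤ (V M).card + a := by
    intro M hM
    obtain ⟨⟨hME, hmatch, hcov⟩, heM⟩ := hSmem M hM
    have hMcard : M.card ≤ a := by
      rw [← ha]
      calc M.card = (M.image Prod.fst).card := by
            rw [Finset.card_image_of_injOn]
            intro r hr s hs hrs
            by_contra hne
            exact (hmatch r hr s hs hne).1 hrs
        _ ≤ A.card := Finset.card_le_card (by
            intro z hz
            obtain ⟨r, hr, rfl⟩ := Finset.mem_image.mp hz
            exact (hE r (hME hr)).1)
    have hsub : D \ V M ⊆ (M.erase e).image (fun q => (x, q.2)) := by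
      intro p hp
      obtain ⟨hpD, hpV⟩ := Finset.mem_sdiff.mp hp
      have hpx : p.1 = x := (Finset.mem_filter.mp hpD).2
      have : ¬ ∀ q ∈ M.erase e, q.2 ≠ p.2 := by
        intro h
        exact hpV (Finset.mem_filter.mpr ⟨hpD, h⟩)
      push_neg at this
      obtain ⟨q, hq, hq2⟩ := this
      exact Finset.mem_image.mpr ⟨q, hq, by
        rw [hq2]
        exact Prod.ext hpx.symm rfl⟩
    have hVD : V M ⊆ D := Finset.filter_subset _ _
    have hsplit : (D \ V M).card + (V M).card = D.card :=
      Finset.card_sdiff_add_card_eq_card hVD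
    have h3 : (D \ V M).card ≤ (M.erase e).card :=
      le_trans (Finset.card_le_card hsub) Finset.card_image_le
    have h1 : D.card ≤ (V M).card + (M.erase e).card := by omega
    have h2 : (M.erase e).card + 1 = M.card := by
      rw [Finset.card_erase_of_mem heM]
      have : 1 ≤ M.card := Finset.card_pos.mpr ⟨e, heM⟩
      omega
    omega
  -- main counting
  have hcount : S.card * (D.card + 1) ≤ T.card + S.card * a := by
    have hbU : (S.biUnion F).card ≤ T.card := by
      apply Finset.card_le_card
      intro N hN
      obtain ⟨M, hM, hNM⟩ := Finset.mem_biUnion.mp hN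
      exact hFT M hM hNM
    have hbUcard : (S.biUnion F).card = ∑ M ∈ S, (F M).card :=
      Finset.card_biUnion hdisj
    calc S.card * (D.card + 1) = ∑ _M ∈ S, (D.card + 1) := by
          rw [Finset.sum_const, smul_eq_mul]
      _ ≤ ∑ M ∈ S, ((V M).card + a) := Finset.sum_le_sum (fun M hM => hVcard M hM)
      _ = (∑ M ∈ S, (V M).card) + S.card * a := by
          rw [Finset.sum_add_distrib, Finset.sum_const, smul_eq_mul]
      _ = (∑ M ∈ S, (F M).card) + S.card * a := by
          rw [Finset.sum_congr rfl (fun M hM => (hFcard M hM).symm)]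
      _ ≤ T.card + S.card * a := by omega
  -- arithmetic
  have hdx : 2 * b ≤ 3 * D.card := hdeg x hx
  have ha1 : 1 ≤ a := by rw [← ha]; exact Finset.card_pos.mpr ⟨x, hx⟩
  have hb2a : b + 2 * a ≤ 2 * (D.card + 1) := by omega
  nlinarith [Nat.mul_le_mul_right S.card hb2a, hcount]
end

section
/- Define $A:\mathbb{N}\to\mathbb{Q}$ by $A(0)=0$, $A(1)=2$, and $A(d+1)=A(d)+2A(d-1)+5\cdot 2^{d-1}$ for $d\ge 1$. Then for all $d\ge 1$, $A(d) \ge \frac{5}{6}\, d\, 2^d$. -/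
/-- If `A 0 = 0`, `A 1 = 2` and `A (d+1) = A d + 2 A (d-1) + 5 · 2^(d-1)` for `d ≥ 1`,
then `A d ≥ (5/6) d 2^d` for all `d ≥ 1`. -/
theorem stmt5 (A : ℕ → ℚ) (hA0 : A 0 = 0) (hA1 : A 1 = 2)
    (hrec : ∀ d : ℕ, 1 ≤ d → A (d + 1) = A d + 2 * A (d - 1) + 5 * 2 ^ (d - 1)) :
    ∀ d : ℕ, 1 ≤ d → A d ≥ 5 / 6 * d * 2 ^ d := by
  set f : ℕ → ℚ := fun d => 5 / 6 * d * 2 ^ d + (2 ^ d - (-1 : ℚ) ^ d) / 9 with hf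
  have key : ∀ d : ℕ, A d = f d ∧ A (d + 1) = f (d + 1) := by
    intro d
    induction d with
    | zero => constructor <;> simp [hf, hA0, hA1] <;> norm_num
    | succ n ih =>
      refine ⟨ih.2, ?_⟩
      rw [hrec (n + 1) (Nat.le_add_left 1 n)]
      simp only [Nat.add_sub_cancel, ih.1, ih.2, hf]
      push_cast
      ring
  intro d hd
  rw [(key d).1, hf]
  have h1 : (-1 : ℚ) ^ d ≤ 1 := by
    rcases Nat.even_or_odd d with h | h
    · simp [h.neg_one_pow]
    · rw [h.neg_one_pow]; norm_num
  have h2 : (1 : ℚ) ≤ 2 ^ d := one_le_pow₀ (by norm_num)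
  simp only
  nlinarith
end

section
/- Let $V$ be a finite set and let $\rho$ be a complete binary tree with geometric edge weights as in the construction (all leaves at the same depth), whose vertex set indexes a partition $V = \bigcup_{x\in V(\rho)} V_x$. Define $w_N$ on $V$ by: for $v\in V_x$, $v'\in V_{x'}$ with (wlog) the depth of $x$ at least the depth of $x'$, set $w_N(v,v') = \mathrm{dist}_\rho(\tilde x, x) + \mathrm{dist}_\rho(\tilde x, x')$, where $\tilde x$ is any deepest-level leaf descendant of $x$ in $\rho$ (the value is independent of the choice of $\tilde x$), and $w_N(v,v)=0$. Then $w_N$ satisfies the triangle inequality: for all $v_1,v_2,v_3\in V$, $w_N(v_1,v_2) \le w_N(v_1,v_3) + w_N(v_3,v_2)$. -/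
/-- Weight of an edge joining a depth-`i` node of the complete binary tree of depth `d`
to its parent: `1` at the bottom level (`i = d`) and `2^((d-1)-i)` for `1 ≤ i ≤ d-1`. -/
def levelWeight (d i : ℕ) : ℕ := if i = d then 1 else 2 ^ (d - 1 - i)

/-- Weighted tree-distance from a depth-`i` node to its depth-`j` ancestor (`j ≤ i`)
in the complete binary tree of depth `d`: sum of the edge weights along the path. -/
def distUp (d i j : ℕ) : ℕ := ∑ s ∈ Finset.Icc (j + 1) i, levelWeight d s

/-- Length of the longest common prefix of two nodes of the binary tree, nodes being
encoded as lists of booleans (the path from the root); this is the depth of their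
lowest common ancestor. -/
def lcaDepth : List Bool → List Bool → ℕ
  | a :: as, b :: bs => if a = b then lcaDepth as bs + 1 else 0
  | _, _ => 0

/-- The value `w_N` on two (not necessarily distinct) nodes `x, x'` of the tree:
`dist_ρ(x̃, x) + dist_ρ(x̃, x')` where `x̃` is a depth-`d` leaf descendant of the
deeper of the two nodes. -/
def wNnode (d : ℕ) (x x' : List Bool) : ℕ :=
  if x'.length ≤ x.length then
    distUp d d x.length + distUp d d (lcaDepth x x') + distUp d x'.length (lcaDepth x x')
  else
    distUp d d x'.length + distUp d d (lcaDepth x x') + distUp d x.length (lcaDepth x x')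

/-- The metric `w_N` on the point set `V`, where `φ v` is the tree node indexing the
group containing `v`: distinct points are at distance `wNnode` of their nodes, and
`w_N(v, v) = 0`. -/
def wNmetric {V : Type*} [DecidableEq V] (d : ℕ) (φ : V → List Bool) (v v' : V) : ℕ :=
  if v = v' then 0 else wNnode d (φ v) (φ v')

theorem lcaDepth_le_left : ∀ x y : List Bool, lcaDepth x y ≤ x.length
  | a :: as, b :: bs => by
    simp only [lcaDepth, List.length_cons]
    split
    · exact Nat.succ_le_succ (lcaDepth_le_left as bs)
    · exact Nat.zero_le _
  | [], _ => by simp [lcaDepth]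
  | _ :: _, [] => by simp [lcaDepth]

theorem lcaDepth_comm : ∀ x y : List Bool, lcaDepth x y = lcaDepth y x
  | a :: as, b :: bs => by
    simp only [lcaDepth]
    by_cases h : a = b
    · simp [h, lcaDepth_comm as bs]
    · rw [if_neg h, if_neg (fun hh => h hh.symm)]
  | [], [] => rfl
  | [], _ :: _ => by simp [lcaDepth]
  | _ :: _, [] => by simp [lcaDepth]

theorem lcaDepth_le_right (x y : List Bool) : lcaDepth x y ≤ y.length := by
  rw [lcaDepth_comm]; exact lcaDepth_le_left y x

theorem lca_ultra : ∀ x z y : List Bool,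
    min (lcaDepth x z) (lcaDepth z y) ≤ lcaDepth x y
  | a :: as, c :: cs, b :: bs => by
    simp only [lcaDepth]
    by_cases h1 : a = c <;> by_cases h2 : c = b
    · have h3 : a = b := h1.trans h2
      simp only [h1, h2, h3, if_true, reduceIte]
      have := lca_ultra as cs bs
      omega
    · have h3 : ¬ a = b := fun h => h2 (h1.symm.trans h)
      simp [h1, h2, h3]
    · simp [h1]
    · simp [h1]
  | [], _, _ => by simp [lcaDepth]
  | _ :: _, [], _ => by simp [lcaDepth]
  | _ :: _, _ :: _, [] => by simp [lcaDepth]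

theorem distUp_add {d i j k : ℕ} (h1 : j ≤ i) (h2 : i ≤ k) :
    distUp d k j = distUp d i j + distUp d k i := by
  unfold distUp
  rw [Finset.Icc_add_one_left_eq_Ioc, Finset.Icc_add_one_left_eq_Ioc, Finset.Icc_add_one_left_eq_Ioc]
  exact (Finset.sum_Ioc_consecutive _ h1 h2).symm

theorem distUp_anti {d i j : ℕ} (h1 : i ≤ j) (h2 : j ≤ d) :
    distUp d d j ≤ distUp d d i := by
  rw [distUp_add h1 h2]; omega

theorem wNnode_cast (d : ℕ) (x y : List Bool) (hx : x.length ≤ d) (hy : y.length ≤ d) :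
    (wNnode d x y : ℤ) =
      2 * distUp d d (lcaDepth x y) + distUp d d x.length + distUp d d y.length
        - 2 * max (distUp d d x.length) (distUp d d y.length) := by
  unfold wNnode
  split
  · rename_i h
    have hL : lcaDepth x y ≤ y.length := lcaDepth_le_right x y
    have e1 : distUp d d (lcaDepth x y)
        = distUp d y.length (lcaDepth x y) + distUp d d y.length := distUp_add hL hy
    have e2 : distUp d d y.length
        = distUp d x.length y.length + distUp d d x.length := distUp_add h hx
    have hab : distUp d d x.length ≤ distUp d d y.length := by omega
    rw [max_eq_right hab]
    push_cast
    omega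
  · rename_i h
    have h' : x.length ≤ y.length := by omega
    have hL : lcaDepth x y ≤ x.length := lcaDepth_le_left x y
    have e1 : distUp d d (lcaDepth x y)
        = distUp d x.length (lcaDepth x y) + distUp d d x.length := distUp_add hL hx
    have e2 : distUp d d x.length
        = distUp d y.length x.length + distUp d d y.length := distUp_add h' hy
    have hab : distUp d d y.length ≤ distUp d d x.length := by omega
    rw [max_eq_left hab]
    push_cast
    omega

theorem wNnode_triangle (d : ℕ) (x y z : List Bool)
    (hx : x.length ≤ d) (hy : y.length ≤ d) (hz : z.length ≤ d) :
    wNnode d x y ≤ wNnode d x z + wNnode d z y := by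
  have key : (wNnode d x y : ℤ) ≤ (wNnode d x z : ℤ) + (wNnode d z y : ℤ) := by
    rw [wNnode_cast d x y hx hy, wNnode_cast d x z hx hz, wNnode_cast d z y hz hy]
    have hcB : distUp d d z.length ≤ distUp d d (lcaDepth x z) :=
      distUp_anti (lcaDepth_le_right x z) hz
    have hcC : distUp d d z.length ≤ distUp d d (lcaDepth z y) :=
      distUp_anti (lcaDepth_le_left z y) hz
    have haB : distUp d d x.length ≤ distUp d d (lcaDepth x z) :=
      distUp_anti (lcaDepth_le_left x z) hx
    have hbC : distUp d d y.length ≤ distUp d d (lcaDepth z y) :=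
      distUp_anti (lcaDepth_le_right z y) hy
    have hA : distUp d d (lcaDepth x y) ≤ distUp d d (lcaDepth x z) ∨
        distUp d d (lcaDepth x y) ≤ distUp d d (lcaDepth z y) := by
      rcases le_total (lcaDepth x z) (lcaDepth z y) with h | h
      · left
        refine distUp_anti ?_ ((lcaDepth_le_left x y).trans hx)
        have := lca_ultra x z y
        omega
      · right
        refine distUp_anti ?_ ((lcaDepth_le_left x y).trans hx)
        have := lca_ultra x z y
        omega
    omega
  exact_mod_cast key

/-- The function `w_N` built from the complete binary tree of depth `d ≥ 1` with
geometric edge weights satisfies the triangle inequality. -/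
theorem stmt8 {V : Type*} [DecidableEq V] (d : ℕ) (hd : 1 ≤ d)
    (φ : V → List Bool) (hφ : ∀ v, (φ v).length ≤ d) :
    ∀ v1 v2 v3 : V,
      wNmetric d φ v1 v2 ≤ wNmetric d φ v1 v3 + wNmetric d φ v3 v2 := by
  intro v1 v2 v3
  unfold wNmetric
  by_cases h12 : v1 = v2
  · simp [h12]
  · by_cases h13 : v1 = v3
    · subst h13
      simp [h12]
    · by_cases h32 : v3 = v2
      · subst h32
        simp [h12]
      · simp only [h12, h13, h32, if_neg]
        exact wNnode_triangle d (φ v1) (φ v2) (φ v3) (hφ v1) (hφ v2) (hφ v3)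
end

section
/- Let $(V,T,w)$ be a metric space with terminal set $T\subseteq V$, $|T|=k$. Then the minimum weight of a spanning tree of the induced metric on $T$ is at most twice the minimum Steiner tree cost $\mathrm{ST}(V,T,w)$ (the minimum total weight of a tree in the complete graph on $V$ that spans all vertices of $T$). -/
/-- The weight of an unordered edge, obtained by symmetrizing `w`. For a symmetric
`w` this is just `w` applied to the two endpoints. -/
noncomputable def edgeW {V : Type*} (w : V → V → ℝ) : Sym2 V → ℝ :=
  Sym2.lift ⟨fun a b => (w a b + w b a) / 2, fun a b => by ring⟩

/-- Total weight of a finite set of unordered edges. -/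
noncomputable def treeCost {V : Type*} (w : V → V → ℝ) (E : Finset (Sym2 V)) : ℝ :=
  ∑ e ∈ E, edgeW w e

/-- The edge set `E` connects all terminals of `T` to each other. -/
def Connects {V : Type*} (E : Finset (Sym2 V)) (T : Finset V) : Prop :=
  ∀ u ∈ T, ∀ v ∈ T, (SimpleGraph.fromEdgeSet (E : Set (Sym2 V))).Reachable u v

/-- `E` is (the edge set of) a Steiner tree for the terminal set `T`: its edges are
non-loops, form an acyclic graph, and connect all terminals. -/
def IsSteinerTree {V : Type*} (E : Finset (Sym2 V)) (T : Finset V) : Prop :=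
  (∀ e ∈ E, ¬ e.IsDiag) ∧
  (SimpleGraph.fromEdgeSet (E : Set (Sym2 V))).IsAcyclic ∧ Connects E T

/-!
Doubling the forest `E` gives a closed walk through every terminal of length at most
`2 * treeCost w E`: an edge `s(r, b)` at the root is a bridge, so the two sides of it can be toured
recursively and joined by traversing `s(r, b)` once in each direction. By the triangle inequality,
shortcutting this walk to the terminals does not make it longer; the pairs of consecutive
vertices of the shortcut walk span a connected graph on `T` of no larger weight, and a spanning
forest of that graph is the required tree.
-/

open SimpleGraph

section Cost

variable {V : Type*} (w : V → V → ℝ)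

lemma edgeW_mk (hsymm : ∀ a b, w a b = w b a) (a b : V) : edgeW w s(a, b) = w a b := by
  change (w a b + w b a) / 2 = w a b
  rw [hsymm b a]
  ring

lemma edgeW_nonneg (hnn : ∀ a b, 0 ≤ w a b) (e : Sym2 V) : 0 ≤ edgeW w e := by
  induction e using Sym2.ind with
  | _ a b => exact div_nonneg (add_nonneg (hnn a b) (hnn b a)) zero_le_two

lemma treeCost_nonneg (hnn : ∀ a b, 0 ≤ w a b) (E : Finset (Sym2 V)) : 0 ≤ treeCost w E :=
  Finset.sum_nonneg fun e _ => edgeW_nonneg w hnn e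

lemma treeCost_mono (hnn : ∀ a b, 0 ≤ w a b) {E F : Finset (Sym2 V)} (h : E ⊆ F) :
    treeCost w E ≤ treeCost w F :=
  Finset.sum_le_sum_of_subset_of_nonneg h fun e _ _ => edgeW_nonneg w hnn e

noncomputable def pathCost : List V → ℝ
  | [] => 0
  | [_] => 0
  | a :: b :: l => w a b + pathCost (b :: l)

@[simp] lemma pathCost_nil : pathCost w ([] : List V) = 0 := rfl

@[simp] lemma pathCost_singleton (a : V) : pathCost w [a] = 0 := rfl

@[simp] lemma pathCost_cons_cons (a b : V) (l : List V) :
    pathCost w (a :: b :: l) = w a b + pathCost w (b :: l) := rfl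

lemma pathCost_append_cons (c : V) (l₂ : List V) :
    ∀ l₁ : List V, pathCost w (l₁ ++ c :: l₂) = pathCost w (l₁ ++ [c]) + pathCost w (c :: l₂)
  | [] => by simp
  | [a] => by simp
  | a :: b :: l₁ => by
    change w a b + pathCost w (b :: l₁ ++ c :: l₂) = w a b + pathCost w (b :: l₁ ++ [c]) + _
    rw [pathCost_append_cons c l₂ (b :: l₁), add_assoc]

variable {w} (hnn : ∀ a b, 0 ≤ w a b) (htri : ∀ a b c, w a c ≤ w a b + w b c)
include hnn htri

lemma pathCost_cons_le_cons_cons (a b : V) : ∀ l : List V,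
    pathCost w (a :: l) ≤ pathCost w (a :: b :: l)
  | [] => by simpa using hnn a b
  | c :: l => by
    simp only [pathCost_cons_cons]
    linarith [htri a b c]

lemma pathCost_cons_le_cons_of_sublist {l₁ l₂ : List V} (h : l₁.Sublist l₂) (a : V) :
    pathCost w (a :: l₁) ≤ pathCost w (a :: l₂) := by
  induction h generalizing a with
  | slnil => rfl
  | cons b _ ih => exact (ih a).trans (pathCost_cons_le_cons_cons hnn htri a b _)
  | cons_cons b _ ih => simpa using ih b

lemma pathCost_le_of_sublist {l₁ l₂ : List V} (h : l₁.Sublist l₂) :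
    pathCost w l₁ ≤ pathCost w l₂ := by
  induction h with
  | slnil => rfl
  | @cons l₁ l₂ b _ ih =>
    cases l₂ with
    | nil => exact ih
    | cons c l₂ => exact ih.trans (by simpa using hnn b c)
  | cons_cons b h => exact pathCost_cons_le_cons_of_sublist hnn htri h b

end Cost

section PathEdges

variable {V : Type*} [DecidableEq V]

def pathEdges : List V → Finset (Sym2 V)
  | [] | [_] => ∅
  | a :: b :: l => insert s(a, b) (pathEdges (b :: l))

lemma mem_of_mem_pathEdges : ∀ {l : List V} {e : Sym2 V}, e ∈ pathEdges l → ∀ x ∈ e, x ∈ l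
  | [], _, he | [_], _, he => by simp [pathEdges] at he
  | a :: b :: l, e, he => by
    intro x hx
    rcases Finset.mem_insert.1 he with rfl | he
    · rcases Sym2.mem_iff.1 hx with rfl | rfl <;> simp
    · exact List.mem_cons_of_mem a (mem_of_mem_pathEdges he x hx)

lemma treeCost_pathEdges_le (w : V → V → ℝ) (hsymm : ∀ a b, w a b = w b a)
    (hnn : ∀ a b, 0 ≤ w a b) : ∀ l : List V, treeCost w (pathEdges l) ≤ pathCost w l
  | [] | [_] => by simp [pathEdges, treeCost]
  | a :: b :: l => by
    have ih := treeCost_pathEdges_le w hsymm hnn (b :: l)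
    rw [pathEdges, pathCost_cons_cons]
    by_cases hab : s(a, b) ∈ pathEdges (b :: l)
    · rw [Finset.insert_eq_of_mem hab]
      linarith [hnn a b]
    · rw [treeCost, Finset.sum_insert hab, edgeW_mk w hsymm]
      exact add_le_add_right ih _

lemma reachable_pathEdges_cons : ∀ {a : V} {l : List V} {x : V}, x ∈ a :: l →
    (fromEdgeSet (pathEdges (a :: l) : Set (Sym2 V))).Reachable a x
  | a, [], x, hx => by rw [List.mem_singleton.1 hx]
  | a, b :: l, x, hx => by
    have hmono : fromEdgeSet (pathEdges (b :: l) : Set (Sym2 V)) ≤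
        fromEdgeSet (pathEdges (a :: b :: l) : Set (Sym2 V)) :=
      fromEdgeSet_mono (by simp [pathEdges])
    rcases List.mem_cons.1 hx with rfl | hx
    · rfl
    have hab : (fromEdgeSet (pathEdges (a :: b :: l) : Set (Sym2 V))).Reachable a b := by
      by_cases heq : a = b
      · rw [heq]
      · exact Adj.reachable ((fromEdgeSet_adj _).2 ⟨by simp [pathEdges], heq⟩)
    exact hab.trans ((reachable_pathEdges_cons hx).mono hmono)

lemma connects_pathEdges (l : List V) (T : Finset V) (hT : ∀ x ∈ T, x ∈ l) :
    Connects (pathEdges l) T := by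
  intro u hu v hv
  cases l with
  | nil => exact absurd (hT u hu) List.not_mem_nil
  | cons a l =>
    exact (reachable_pathEdges_cons (hT u hu)).symm.trans (reachable_pathEdges_cons (hT v hv))

end PathEdges

namespace SimpleGraph

variable {V : Type*} {G : SimpleGraph V}

lemma Reachable.reachable_deleteEdges_or {a v : V} (h : G.Reachable a v) (b : V) :
    (G.deleteEdges {s(a, b)}).Reachable a v ∨ (G.deleteEdges {s(a, b)}).Reachable b v := by
  rw [reachable_iff_reflTransGen] at h
  induction h with
  | refl => exact Or.inl .rfl
  | @tail u x _ hux ih =>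
    by_cases he : s(u, x) = s(a, b)
    · rcases Sym2.eq_iff.1 he with ⟨-, rfl⟩ | ⟨-, rfl⟩
      · exact Or.inr .rfl
      · exact Or.inl .rfl
    · have hadj : (G.deleteEdges {s(a, b)}).Adj u x := (deleteEdges_adj ..).2 ⟨hux, he⟩
      exact ih.imp (·.trans hadj.reachable) (·.trans hadj.reachable)

end SimpleGraph

section Components

variable {V : Type*}

open scoped Classical

noncomputable def componentEdges (F : Finset (Sym2 V)) (r : V) : Finset (Sym2 V) :=
  F.filter fun e => ∀ x ∈ e, (fromEdgeSet (F : Set (Sym2 V))).Reachable r x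

lemma componentEdges_subset (F : Finset (Sym2 V)) (r : V) : componentEdges F r ⊆ F :=
  Finset.filter_subset _ _

lemma reachable_componentEdges {F : Finset (Sym2 V)} {r v : V}
    (h : (fromEdgeSet (F : Set (Sym2 V))).Reachable r v) :
    (fromEdgeSet (componentEdges F r : Set (Sym2 V))).Reachable r v := by
  rw [reachable_iff_reflTransGen] at h
  induction h with
  | refl => rfl
  | @tail u x hru hux ih =>
    have hru : (fromEdgeSet (F : Set (Sym2 V))).Reachable r u :=
      (reachable_iff_reflTransGen _ _).2 hru
    have hmem : s(u, x) ∈ componentEdges F r := by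
      refine Finset.mem_filter.2 ⟨by simpa using ((fromEdgeSet_adj _).1 hux).1, fun y hy => ?_⟩
      rcases Sym2.mem_iff.1 hy with rfl | rfl
      · exact hru
      · exact hru.trans hux.reachable
    exact ih.trans (Adj.reachable ((fromEdgeSet_adj _).2 ⟨hmem, hux.ne⟩))

lemma disjoint_componentEdges {F : Finset (Sym2 V)} {a b : V}
    (h : ¬ (fromEdgeSet (F : Set (Sym2 V))).Reachable a b) :
    Disjoint (componentEdges F a) (componentEdges F b) := by
  refine Finset.disjoint_left.2 fun e ha hb => h ?_
  have hx := Sym2.out_fst_mem e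
  exact ((Finset.mem_filter.1 ha).2 _ hx).trans ((Finset.mem_filter.1 hb).2 _ hx).symm

end Components

lemma exists_isSteinerTree_subset {V : Type*} {P : Finset (Sym2 V)} {T : Finset V}
    (h : Connects P T) : ∃ E ⊆ P, IsSteinerTree E T := by
  classical
  obtain ⟨H, hHP, hH, hreach⟩ := (fromEdgeSet (P : Set (Sym2 V))).exists_isAcyclic_reachable_eq_le
  have hHE : fromEdgeSet ((P.filter (· ∈ H.edgeSet) : Finset (Sym2 V)) : Set (Sym2 V)) = H := by
    ext u v
    simp only [fromEdgeSet_adj, Finset.coe_filter]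
    exact ⟨fun h => h.1.2, fun h => ⟨⟨by simpa using ((fromEdgeSet_adj _).1 (hHP h)).1, h⟩, h.ne⟩⟩
  refine ⟨P.filter (· ∈ H.edgeSet), Finset.filter_subset _ _,
    fun e he => H.not_isDiag_of_mem_edgeSet (Finset.mem_filter.1 he).2, by rwa [hHE], ?_⟩
  intro u hu v hv
  rw [hHE, hreach]
  exact h u hu v hv

section Tour

variable {V : Type*} [DecidableEq V] {w : V → V → ℝ}

theorem exists_tour_of_isAcyclic (hsymm : ∀ a b, w a b = w b a) (h0 : ∀ a, w a a = 0)
    (hnn : ∀ a b, 0 ≤ w a b) (E : Finset (Sym2 V))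
    (hE : (fromEdgeSet (E : Set (Sym2 V))).IsAcyclic) (r : V) :
    ∃ L : List V, (∀ v, (fromEdgeSet (E : Set (Sym2 V))).Reachable r v → v ∈ r :: L) ∧
      pathCost w (r :: L ++ [r]) ≤ 2 * treeCost w E := by
  induction E using Finset.strongInduction generalizing r with
  | H E ih =>
  by_cases hr : ∃ b, (fromEdgeSet (E : Set (Sym2 V))).Adj r b
  swap
  · simp only [not_exists] at hr
    refine ⟨[], fun v ⟨p⟩ => ?_, by simp [h0, treeCost_nonneg w hnn]⟩
    cases p with
    | nil => exact List.mem_singleton_self r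
    | cons h _ => exact absurd h (hr _)
  obtain ⟨b, hrb⟩ := hr
  set F := E.erase s(r, b)
  have hF : fromEdgeSet (F : Set (Sym2 V)) =
      (fromEdgeSet (E : Set (Sym2 V))).deleteEdges {s(r, b)} := by
    rw [Finset.coe_erase, fromEdgeSet_sdiff, deleteEdges]
  have hbridge : ¬ (fromEdgeSet (F : Set (Sym2 V))).Reachable r b := by
    rw [hF, ← isBridge_iff]
    exact isAcyclic_iff_forall_isBridge.1 hE hrb
  have hrbE : s(r, b) ∈ E := by simpa using ((fromEdgeSet_adj _).1 hrb).1
  have hsub (c : V) : componentEdges F c ⊂ E :=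
    (componentEdges_subset F c).trans_ssubset (Finset.erase_ssubset hrbE)
  have hacyc (c : V) : (fromEdgeSet (componentEdges F c : Set (Sym2 V))).IsAcyclic :=
    hE.anti (fromEdgeSet_mono (Finset.coe_subset.2 (hsub c).subset))
  obtain ⟨La, hLa, hca⟩ := ih _ (hsub r) (hacyc r) r
  obtain ⟨Lb, hLb, hcb⟩ := ih _ (hsub b) (hacyc b) b
  refine ⟨b :: Lb ++ b :: r :: La, fun v hv => ?_, ?_⟩
  · rcases hv.reachable_deleteEdges_or b with hv | hv <;> rw [← hF] at hv
    · have hva := hLa v (reachable_componentEdges hv)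
      simp only [List.mem_cons, List.mem_append] at hva ⊢
      tauto
    · have hvb := hLb v (reachable_componentEdges hv)
      simp only [List.mem_cons, List.mem_append] at hvb ⊢
      tauto
  · have hsplit : treeCost w (componentEdges F r) + treeCost w (componentEdges F b) ≤
        treeCost w F := by
      rw [treeCost, treeCost, ← Finset.sum_union (disjoint_componentEdges hbridge)]
      exact treeCost_mono w hnn
        (Finset.union_subset (componentEdges_subset F r) (componentEdges_subset F b))
    have herase : treeCost w E = w r b + treeCost w F := by
      rw [← edgeW_mk w hsymm, treeCost, treeCost, Finset.add_sum_erase _ _ hrbE]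
    have htour : pathCost w (r :: (b :: Lb ++ b :: r :: La) ++ [r]) =
        w r b + pathCost w (b :: Lb ++ [b]) + (w b r + pathCost w (r :: La ++ [r])) := by
      simp only [List.cons_append, List.append_assoc, pathCost_cons_cons]
      rw [← List.cons_append, pathCost_append_cons, List.cons_append, pathCost_cons_cons, add_assoc]
    rw [htour, hsymm b r]
    linarith

end Tour

theorem stmt9_general {V : Type*} (w : V → V → ℝ)
    (hsymm : ∀ a b, w a b = w b a) (h0 : ∀ a, w a a = 0)
    (htri : ∀ a b c, w a c ≤ w a b + w b c)
    (T : Finset V) (E : Finset (Sym2 V)) (hE : IsSteinerTree E T) :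
    ∃ E' : Finset (Sym2 V), IsSteinerTree E' T ∧ (∀ e ∈ E', ∀ x ∈ e, x ∈ T) ∧
      treeCost w E' ≤ 2 * treeCost w E := by
  classical
  have hnn (a b : V) : 0 ≤ w a b := by linarith [htri a b a, h0 a, hsymm a b]
  obtain ⟨-, hacyc, hconn⟩ := hE
  obtain ⟨M, hTM, hM⟩ : ∃ M : List V, (∀ x ∈ T, x ∈ M) ∧ pathCost w M ≤ 2 * treeCost w E := by
    rcases T.eq_empty_or_nonempty with rfl | ⟨r, hr⟩
    · exact ⟨[], by simp, by simpa using treeCost_nonneg w hnn E⟩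
    obtain ⟨L, hL, hcost⟩ := exists_tour_of_isAcyclic hsymm h0 hnn E hacyc r
    exact ⟨r :: L ++ [r], fun x hx => List.mem_append_left _ (hL x (hconn r hr x hx)), hcost⟩
  set N := M.filter (· ∈ T)
  have hTN : ∀ x ∈ T, x ∈ N := fun x hx => List.mem_filter.2 ⟨hTM x hx, by simpa⟩
  obtain ⟨E', hE'N, hE'⟩ := exists_isSteinerTree_subset (connects_pathEdges N T hTN)
  refine ⟨E', hE', fun e he x hx => ?_, ?_⟩
  · simpa using (List.mem_filter.1 (mem_of_mem_pathEdges (hE'N he) x hx)).2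
  calc treeCost w E' ≤ treeCost w (pathEdges N) := treeCost_mono w hnn hE'N
    _ ≤ pathCost w N := treeCost_pathEdges_le w hsymm hnn N
    _ ≤ pathCost w M := pathCost_le_of_sublist hnn htri List.filter_sublist
    _ ≤ 2 * treeCost w E := hM

/-- In a metric space, for every Steiner tree `E` of the terminal set `T` there is a
spanning tree of the induced metric on `T` (a Steiner tree all of whose edges join
terminals) of cost at most twice the cost of `E`.  In particular the minimum terminal
spanning tree cost is at most twice the minimum Steiner tree cost. -/
theorem stmt9 {V : Type*} [DecidableEq V] (w : V → V → ℝ)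
    (hsymm : ∀ a b, w a b = w b a) (h0 : ∀ a, w a a = 0)
    (hnn : ∀ a b, 0 ≤ w a b) (htri : ∀ a b c, w a c ≤ w a b + w b c)
    (T : Finset V) (E : Finset (Sym2 V)) (hE : IsSteinerTree E T) :
    ∃ E' : Finset (Sym2 V), IsSteinerTree E' T ∧ (∀ e ∈ E', ∀ x ∈ e, x ∈ T) ∧
      treeCost w E' ≤ 2 * treeCost w E :=
  stmt9_general w hsymm h0 htri T E hE
end

section
/- With the parameters of the previous construction ($\alpha\ge 2$ integer, $t=k/(100\alpha)$), any spanning tree of $T$ whose cost is at most $\alpha$ times the minimum spanning tree cost must contain at least $0.01 k$ weight-1 edges. -/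
/- A spanning tree on `k = 100αt` points has `k - 1` edges, each of weight `1` or `2α`. If `a` of
them have weight `1`, its cost is `a + 2α(k - 1 - a)`; comparing this with `α` times the minimum
spanning tree cost `(k - t) + 2α(t - 1)` gives `(2α - 1)(a - αt) ≥ 0`, i.e. `a ≥ αt = 0.01k`. -/

open Finset

namespace IsSteinerTree

variable {V : Type*} {E : Finset (Sym2 V)}

lemma edgeSet_fromEdgeSet {T : Finset V} (hE : IsSteinerTree E T) :
    (SimpleGraph.fromEdgeSet (E : Set (Sym2 V))).edgeSet = E := by
  rw [SimpleGraph.edgeSet_fromEdgeSet, sdiff_eq_left, Set.disjoint_left]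
  exact hE.1

lemma isTree [Fintype V] [Nonempty V] (hE : IsSteinerTree E univ) :
    (SimpleGraph.fromEdgeSet (E : Set (Sym2 V))).IsTree where
  connected := SimpleGraph.connected_iff _ |>.mpr
    ⟨fun u v => hE.2.2 u (mem_univ u) v (mem_univ v), ‹_›⟩
  isAcyclic := hE.2.1

lemma card_add_one [Fintype V] [Nonempty V] (hE : IsSteinerTree E univ) :
    E.card + 1 = Fintype.card V := by
  classical
  have hEF : (SimpleGraph.fromEdgeSet (E : Set (Sym2 V))).edgeFinset = E :=
    Finset.coe_injective (by rw [SimpleGraph.coe_edgeFinset, hE.edgeSet_fromEdgeSet])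
  rw [← hE.isTree.card_edgeFinset, hEF]

end IsSteinerTree

lemma edgeW_eq_one_or_of_not_isDiag {V ι : Type*} [DecidableEq V] [DecidableEq ι]
    {w : V → V → ℝ} (part : V → ι) (c : ℝ)
    (hw : ∀ u v, w u v = if u = v then 0 else if part u = part v then 1 else c)
    {e : Sym2 V} (he : ¬ e.IsDiag) : edgeW w e = 1 ∨ edgeW w e = c := by
  induction e using Sym2.ind with
  | _ u v =>
    have huv : u ≠ v := by simpa using he
    simp only [edgeW, Sym2.lift_mk, hw, huv, huv.symm, if_false, eq_comm (a := part v)]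
    split_ifs <;> norm_num

lemma treeCost_eq_of_edgeW_eq_one_or {V : Type*} {w : V → V → ℝ}
    {E : Finset (Sym2 V)} {c : ℝ} (hE : ∀ e ∈ E, edgeW w e = 1 ∨ edgeW w e = c) :
    treeCost w E = #{e ∈ E | edgeW w e = 1} + #{e ∈ E | edgeW w e ≠ 1} * c := by
  rw [treeCost, ← Finset.sum_filter_add_sum_filter_not E (fun e => edgeW w e = 1),
    Finset.sum_congr rfl fun e he => (Finset.mem_filter.mp he).2,
    Finset.sum_congr rfl fun e he => ((hE e (Finset.mem_filter.mp he).1).resolve_left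
      (Finset.mem_filter.mp he).2)]
  simp

lemma mul_le_of_cost_le {a b α t : ℝ} (hα : 1 ≤ α) (ht : 1 ≤ t) (hab : a + b = 100 * α * t - 1)
    (hcost : a + b * (2 * α) ≤ α * ((100 * α * t - t) + (t - 1) * (2 * α))) :
    α * t ≤ a := by
  have key : 0 ≤ (2 * α - 1) * (a - α * t) := by
    nlinarith [mul_nonneg (by positivity : (0 : ℝ) ≤ 2 * α) (sub_nonneg.mpr ht)]
  nlinarith

open Classical in
theorem stmt13_general {V : Type*} [Fintype V] [DecidableEq V]
    (α t : ℕ) (hα : 2 ≤ α) (ht : 1 ≤ t)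
    (hk : Fintype.card V = 100 * α * t)
    (part : V → Fin t)
    (w : V → V → ℝ)
    (hw : ∀ u v, w u v = if u = v then 0 else if part u = part v then 1 else 2 * α) :
    ∀ E : Finset (Sym2 V), IsSteinerTree E Finset.univ →
      treeCost w E ≤ (α : ℝ) * ((100 * (α : ℝ) * t - t) + ((t : ℝ) - 1) * (2 * α)) →
      0.01 * (100 * (α : ℝ) * t) ≤ ((E.filter (fun e => edgeW w e = 1)).card : ℝ) := by
  rintro E hE hcost
  -- the `if` in `hw` is evaluated in `ℕ` and only then cast to `ℝ`
  have hw' : ∀ u v, w u v = if u = v then 0 else if part u = part v then 1 else 2 * (α : ℝ) :=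
    fun u v => by rw [hw]; push_cast; rfl
  have : Nonempty V := Fintype.card_pos_iff.mp (by rw [hk]; positivity)
  rw [treeCost_eq_of_edgeW_eq_one_or
    fun e he => edgeW_eq_one_or_of_not_isDiag part _ hw' (hE.1 e he)] at hcost
  have hcard : #{e ∈ E | edgeW w e = 1} + #{e ∈ E | edgeW w e ≠ 1} + 1 = 100 * α * t := by
    rw [card_filter_add_card_filter_not, hE.card_add_one, hk]
  rw [show (0.01 : ℝ) * (100 * α * t) = α * t by ring]
  refine mul_le_of_cost_le (by exact_mod_cast one_le_two.trans hα) (by exact_mod_cast ht)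
    ?_ hcost
  rw [eq_sub_iff_add_eq]
  exact_mod_cast hcard

open Classical in
theorem stmt13 {V : Type*} [Fintype V] [DecidableEq V]
    (α t : ℕ) (hα : 2 ≤ α) (ht : 1 ≤ t)
    (hk : Fintype.card V = 100 * α * t)
    (part : V → Fin t)
    (hsize : ∀ i, (Finset.univ.filter (fun v => part v = i)).card = 100 * α)
    (w : V → V → ℝ)
    (hw : ∀ u v, w u v = if u = v then 0 else if part u = part v then 1 else 2 * α) :
    ∀ E : Finset (Sym2 V), IsSteinerTree E Finset.univ →
      treeCost w E ≤ (α : ℝ) * ((100 * (α : ℝ) * t - t) + ((t : ℝ) - 1) * (2 * α)) →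
      0.01 * (100 * (α : ℝ) * t) ≤ ((E.filter (fun e => edgeW w e = 1)).card : ℝ) :=
  stmt13_general α t hα ht hk part w hw
end

section
/- Let $\tau^*$ be a spanning tree on a $k$-point metric space $(T, w)$ and let $\pi = (u_1, \dots, u_{2k-2})$ be an Euler tour of $\tau^*$ (the closed walk traversing each edge twice). Suppose $T' \subseteq T$ is such that every window of $W$ consecutive elements of $\pi$ contains a vertex of $T'$. For each $u \in T \setminus T'$, let $f(u) \in T'$ minimize $w(u, \cdot)$ over $T'$. Then $\sum_{u \in T\setminus T'} w(u, f(u)) \le W \cdot w(\tau^*)$, where $w(\tau^*)$ is the total edge weight of $\tau^*$. -/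
/- Euler-tour window bound: let `E` be a spanning tree of a `k`-point metric space
`(V, w)` and `π` a closed Euler tour of length `N = 2k - 2` traversing each tree edge
exactly twice.  If every window of `W` consecutive elements of `π` contains a vertex
of `T'`, and `f u` is a nearest point of `T'` to `u`, then
`∑_{u ∉ T'} w(u, f u) ≤ W · w(E)`. -/
open Classical in
theorem stmt19 {V : Type*} [Fintype V] [DecidableEq V]
    (w : V → V → ℝ) (hsymm : ∀ x y, w x y = w y x) (h0 : ∀ x, w x x = 0)
    (hnn : ∀ x y, 0 ≤ w x y) (htri : ∀ x y z, w x z ≤ w x y + w y z)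
    (E : Finset (Sym2 V)) (hE : IsSteinerTree E Finset.univ)
    (k N : ℕ) (hk : k = Fintype.card V) (hN : N = 2 * k - 2)
    (π : ℕ → V) (hper : ∀ i, π (i + N) = π i)
    (hstep : ∀ i, s(π i, π (i + 1)) ∈ E)
    (htwice : ∀ e ∈ E,
      ((Finset.range N).filter (fun i => s(π i, π (i + 1)) = e)).card = 2)
    (hcover : ∀ v : V, ∃ i < N, π i = v)
    (W : ℕ) (T' : Finset V)
    (hwin : ∀ i : ℕ, ∃ j ∈ Finset.Ico i (i + W), π j ∈ T')
    (f : V → V)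
    (hf : ∀ u : V, u ∉ T' → f u ∈ T' ∧ ∀ v ∈ T', w u (f u) ≤ w u v) :
    ∑ u ∈ Finset.univ \ T', w u (f u) ≤ (W : ℝ) * treeCost w E := by
  classical
  -- the step-weight function along the tour
  set g : ℕ → ℝ := fun t => w (π t) (π (t + 1)) with hg
  have hgnn : ∀ t, 0 ≤ g t := fun t => hnn _ _
  have hedge : ∀ e : Sym2 V, 0 ≤ edgeW w e := by
    intro e
    induction e using Sym2.ind with
    | _ a b =>
      have : edgeW w s(a, b) = (w a b + w b a) / 2 := rfl
      rw [this]
      have := hnn a b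
      have := hnn b a
      linarith
  have htc : 0 ≤ treeCost w E := Finset.sum_nonneg fun e _ => hedge e
  -- W ≥ 1
  have hW1 : 1 ≤ W := by
    by_contra h
    obtain ⟨j, hj, _⟩ := hwin 0
    rw [Finset.mem_Ico] at hj
    omega
  -- dispose of the degenerate case N = 0 (then V is empty)
  rcases Nat.eq_zero_or_pos N with hN0 | hNpos
  · have huniv : (Finset.univ : Finset V) = ∅ := by
      rw [Finset.eq_empty_iff_forall_notMem]
      intro v _
      obtain ⟨i, hi, _⟩ := hcover v
      omega
    rw [huniv]
    rw [Finset.empty_sdiff, Finset.sum_empty]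
    exact mul_nonneg (Nat.cast_nonneg W) htc
  -- periodicity facts
  have hperc : ∀ (i c : ℕ), π (i + N * c) = π i := by
    intro i c
    induction c with
    | zero => simp
    | succ c ih =>
      have : i + N * (c + 1) = (i + N * c) + N := by ring
      rw [this, hper, ih]
  have hmodeq : ∀ a b : ℕ, a % N = b % N → π a = π b := by
    have l : ∀ a : ℕ, π a = π (a % N) := by
      intro a
      conv_lhs => rw [← Nat.mod_add_div a N]
      exact hperc _ _
    intro a b h
    rw [l a, l b, h]
  -- same residue in a window of length N implies equality
  have hsame : ∀ (L a b : ℕ), L ≤ a → a < L + N → L ≤ b → b < L + N →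
      a % N = b % N → a = b := by
    intro L a b h1 h2 h3 h4 hmod
    rcases le_total a b with hab | hab
    · rcases Nat.eq_or_lt_of_le hab with h | h
      · exact h
      · have hdvd : N ∣ b - a := (Nat.modEq_iff_dvd' hab).mp hmod
        have : b - a = 0 := Nat.eq_zero_of_dvd_of_lt hdvd (by omega)
        omega
    · rcases Nat.eq_or_lt_of_le hab with h | h
      · exact h.symm
      · have hdvd : N ∣ a - b := (Nat.modEq_iff_dvd' hab).mp hmod.symm
        have : a - b = 0 := Nat.eq_zero_of_dvd_of_lt hdvd (by omega)
        omega
  -- effective window size W' = min W N, still a covering window size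
  set W' := min W N with hW'def
  have hW'pos : 1 ≤ W' := le_min hW1 hNpos
  have hW'N : W' ≤ N := min_le_right _ _
  have hW'W : W' ≤ W := min_le_left _ _
  have hwin' : ∀ i : ℕ, ∃ j : ℕ, i ≤ j ∧ j < i + W' ∧ π j ∈ T' := by
    rcases le_or_gt W N with h | h
    · intro i
      obtain ⟨j, hj, hjT⟩ := hwin i
      rw [Finset.mem_Ico] at hj
      refine ⟨j, hj.1, ?_, hjT⟩
      have : W' = W := by omega
      omega
    · -- N < W : every window of length N contains a T' vertex
      obtain ⟨j0, _, hj0T⟩ := hwin 0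
      have hrT : π (j0 % N) ∈ T' := by
        rw [hmodeq (j0 % N) j0 (Nat.mod_mod_of_dvd j0 dvd_rfl)]
        exact hj0T
      intro i
      set r := j0 % N with hr
      have hrN : r < N := Nat.mod_lt _ hNpos
      have hW'N' : W' = N := by omega
      have hidm : N * (i / N) + i % N = i := Nat.div_add_mod i N
      have himN : i % N < N := Nat.mod_lt _ hNpos
      rcases le_or_gt (i % N) r with hc | hc
      · refine ⟨N * (i / N) + r, by omega, by omega, ?_⟩
        rw [hmodeq (N * (i / N) + r) r ?_]
        · exact hrT
        · rw [Nat.mul_add_mod, Nat.mod_eq_of_lt hrN]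
      · refine ⟨N * (i / N + 1) + r, by nlinarith [Nat.div_add_mod i N], ?_, ?_⟩
        · have : N * (i / N + 1) + r = N * (i / N) + N + r := by ring
          omega
        · rw [hmodeq (N * (i / N + 1) + r) r ?_]
          · exact hrT
          · rw [Nat.mul_add_mod, Nat.mod_eq_of_lt hrN]
  -- choose, for each u ∉ T', an occurrence i ∈ [N*W', N*W'+N) and the
  -- nearest T'-positions p < i < q
  have hex : ∀ u : V, ∃ i p q : ℕ, u ∉ T' →
      π i = u ∧ N * W' ≤ i ∧ i < N * W' + N ∧
      p < i ∧ i < q ∧ i - p < W' ∧ q ≤ p + W' ∧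
      π p ∈ T' ∧ π q ∈ T' ∧
      (∀ x, p < x → x < q → π x ∉ T') := by
    intro u
    by_cases hu : u ∉ T'
    swap
    · exact ⟨0, 0, 0, fun h => absurd h (by simpa using hu)⟩
    obtain ⟨i0, hi0N, hi0⟩ := hcover u
    have hiu' : π (i0 + N * W') = u := by
      rw [hmodeq (i0 + N * W') i0 (Nat.add_mul_mod_self_left i0 N W'), hi0]
    set i := i0 + N * W' with hi
    have hiu : π i = u := hiu'
    have hWi : W' ≤ i := by
      have : W' ≤ N * W' := Nat.le_mul_of_pos_left W' hNpos
      omega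
    -- the backward nearest T'-position p
    have hA : ∃ p : ℕ, p ≤ i ∧ i < p + W' ∧ π p ∈ T' ∧
        (∀ x, p < x → x ≤ i → π x ∉ T') := by
      set A := (Finset.Ico (i + 1 - W') (i + 1)).filter (fun j => π j ∈ T')
        with hA
      have hmemA : ∀ x : ℕ, x ∈ A ↔ (i + 1 - W' ≤ x ∧ x < i + 1) ∧ π x ∈ T' := by
        intro x
        rw [hA, Finset.mem_filter, Finset.mem_Ico]
      have hAne : A.Nonempty := by
        obtain ⟨j, hj1, hj2, hjT⟩ := hwin' (i + 1 - W')
        exact ⟨j, (hmemA j).mpr ⟨⟨hj1, by omega⟩, hjT⟩⟩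
      have hmax := (hmemA _).mp (A.max'_mem hAne)
      refine ⟨A.max' hAne, by omega, by omega, hmax.2, ?_⟩
      · intro x hx1 hx2 hxT
        have hmem : x ∈ A := (hmemA x).mpr ⟨⟨by omega, by omega⟩, hxT⟩
        have := A.le_max' x hmem
        omega
    obtain ⟨p, hp1, hp2, hpT, hpmax⟩ := hA
    have hpi : p < i := by
      rcases Nat.eq_or_lt_of_le hp1 with h | h
      · exact absurd (h ▸ hpT) (by rw [hiu]; exact hu)
      · exact h
    -- the forward nearest T'-position q
    have hB : ∃ q : ℕ, i < q ∧ q < i + 1 + W' ∧ π q ∈ T' ∧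
        (∀ x, i < x → x < q → π x ∉ T') := by
      set B := (Finset.Ico (i + 1) (i + 1 + W')).filter (fun j => π j ∈ T')
        with hB
      have hmemB : ∀ x : ℕ, x ∈ B ↔ (i + 1 ≤ x ∧ x < i + 1 + W') ∧ π x ∈ T' := by
        intro x
        rw [hB, Finset.mem_filter, Finset.mem_Ico]
      have hBne : B.Nonempty := by
        obtain ⟨j, hj1, hj2, hjT⟩ := hwin' (i + 1)
        exact ⟨j, (hmemB j).mpr ⟨⟨hj1, hj2⟩, hjT⟩⟩
      have hmin := (hmemB _).mp (B.min'_mem hBne)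
      refine ⟨B.min' hBne, by omega, by omega, hmin.2, ?_⟩
      · intro x hx1 hx2 hxT
        have hmem : x ∈ B := (hmemB x).mpr ⟨⟨by omega, by omega⟩, hxT⟩
        have := B.min'_le x hmem
        omega
    obtain ⟨q, hq1, hq2, hqT, hqmin⟩ := hB
    -- q ≤ p + W'
    have hqp : q ≤ p + W' := by
      obtain ⟨j, hj1, hj2, hjT⟩ := hwin' (p + 1)
      have hji : i < j := by
        by_contra h
        exact hpmax j (by omega) (by omega) hjT
      have := hqmin j
      by_contra h
      exact (hqmin j hji (by omega)) hjT
    refine ⟨i, p, q, fun _ => ⟨hiu, by omega, by omega, hpi, hq1, by omega, hqp,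
      hpT, hqT, ?_⟩⟩
    intro x hx1 hx2
    rcases le_or_gt x i with h | h
    · exact hpmax x hx1 h
    · exact hqmin x h hx2
  choose I P Q hIPQ using hex
  set S : Finset V := Finset.univ \ T' with hS
  have hmem : ∀ u ∈ S, u ∉ T' := by
    intro u hu
    rw [hS, Finset.mem_sdiff] at hu
    exact hu.2
  -- chain (triangle) inequality along the tour
  have chain : ∀ a b : ℕ, a ≤ b → w (π a) (π b) ≤ ∑ t ∈ Finset.Ico a b, g t := by
    intro a b hab
    induction b, hab using Nat.le_induction with
    | base => simp [h0]
    | succ b hab ih =>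
      have h1 : w (π a) (π (b + 1)) ≤ w (π a) (π b) + w (π b) (π (b + 1)) :=
        htri _ _ _
      rw [Finset.sum_Ico_succ_top (by omega)]
      have h2 : g b = w (π b) (π (b + 1)) := rfl
      linarith
  -- per-vertex bound : 2 w(u, f u) ≤ sum of g over [P u, Q u)
  have hub : ∀ u ∈ S, 2 * w u (f u) ≤ ∑ t ∈ Finset.Ico (P u) (Q u), g t := by
    intro u hu
    have hu' := hmem u hu
    obtain ⟨hiu, _, _, hpi, hiq, _, _, hpT, hqT, _⟩ := hIPQ u hu'
    have h1 : w u (f u) ≤ w u (π (Q u)) := (hf u hu').2 _ hqT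
    have h2 : w (π (I u)) (π (Q u)) ≤ ∑ t ∈ Finset.Ico (I u) (Q u), g t :=
      chain (I u) (Q u) (Nat.le_of_lt hiq)
    rw [hiu] at h2
    have h3 : w u (f u) ≤ w u (π (P u)) := (hf u hu').2 _ hpT
    have h4 : w (π (P u)) (π (I u)) ≤ ∑ t ∈ Finset.Ico (P u) (I u), g t :=
      chain (P u) (I u) (Nat.le_of_lt hpi)
    rw [hiu, hsymm (π (P u)) u] at h4
    have h5 : (∑ t ∈ Finset.Ico (P u) (I u), g t) +
        (∑ t ∈ Finset.Ico (I u) (Q u), g t) = ∑ t ∈ Finset.Ico (P u) (Q u), g t :=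
      Finset.sum_Ico_consecutive g (Nat.le_of_lt hpi) (Nat.le_of_lt hiq)
    linarith
  -- g depends only on residue mod N
  have hgmod : ∀ s : ℕ, g s = g (s % N) := by
    intro s
    have e1 : π s = π (s % N) :=
      hmodeq _ _ (Nat.mod_mod_of_dvd s dvd_rfl).symm
    have e2 : π (s + 1) = π (s % N + 1) := by
      refine hmodeq _ _ ?_
      conv_lhs => rw [Nat.add_mod]
      conv_rhs => rw [Nat.add_mod, Nat.mod_mod_of_dvd s dvd_rfl]
    rw [hg]
    simp only []
    rw [e1, e2]
  -- the arc lemma : segments charging the same residue have the same base residue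
  have arc : ∀ p q p' q' s s' : ℕ, π p ∈ T' → π p' ∈ T' →
      (∀ x, p < x → x < q → π x ∉ T') → (∀ x, p' < x → x < q' → π x ∉ T') →
      p ≤ s → s < q → p' ≤ s' → s' < q' → s % N = s' % N → p % N = p' % N := by
    have key : ∀ p q p' q' s s' : ℕ, s ≤ s' → π p ∈ T' → π p' ∈ T' →
        (∀ x, p < x → x < q → π x ∉ T') → (∀ x, p' < x → x < q' → π x ∉ T') →
        p ≤ s → s < q → p' ≤ s' → s' < q' → s % N = s' % N →
        p % N = p' % N := by
      intro p q p' q' s s' hss hpT hp'T hnq hnq' hps hsq hps' hsq' hmod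
      obtain ⟨c, hc⟩ : ∃ c, s' = s + N * c := by
        obtain ⟨c, hc⟩ := (Nat.modEq_iff_dvd' hss).mp hmod
        exact ⟨c, by omega⟩
      have hPmod : (p + N * c) % N = p % N := Nat.add_mul_mod_self_left p N c
      have hPT : π (p + N * c) ∈ T' := by
        rw [hmodeq (p + N * c) p hPmod]
        exact hpT
      have hnQ : ∀ x, p + N * c < x → x < q + N * c → π x ∉ T' := by
        intro x h1 h2
        have hx : x = (x - N * c) + N * c := by omega
        rw [hx, hperc]
        exact hnq _ (by omega) (by omega)
      have hPs : p + N * c ≤ s' := by omega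
      have hsQ : s' < q + N * c := by omega
      rcases Nat.lt_trichotomy (p + N * c) p' with h | h | h
      · exact absurd hp'T (hnQ p' h (by omega))
      · rw [← h, hPmod]
      · exact absurd hPT (hnq' (p + N * c) h (by omega))
    intro p q p' q' s s' hpT hp'T hnq hnq' hps hsq hps' hsq' hmod
    rcases le_total s s' with h | h
    · exact key p q p' q' s s' h hpT hp'T hnq hnq' hps hsq hps' hsq' hmod
    · exact (key p' q' p q s' s h hp'T hpT hnq' hnq hps' hsq' hps hsq
        hmod.symm).symm
  -- the injection step
  set Φ : (Σ _ : V, ℕ) → ℕ × ℕ := fun x => (x.2 % N, I x.1 - P x.1) with hΦ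
  set Sig : Finset (Σ _ : V, ℕ) := S.sigma (fun u => Finset.Ico (P u) (Q u))
    with hSig
  have hΦinj : ∀ x ∈ Sig, ∀ y ∈ Sig, Φ x = Φ y → x = y := by
    intro x hx y hy hxy
    obtain ⟨u, s⟩ := x
    obtain ⟨v, s'⟩ := y
    simp only [hSig, Finset.mem_sigma, Finset.mem_Ico] at hx hy
    have hu' := hmem u hx.1
    have hv' := hmem v hy.1
    obtain ⟨hiu, hu1, hu2, hpu, hqu, hwu, hqpu, hpTu, hqTu, hnu⟩ := hIPQ u hu'
    obtain ⟨hiv, hv1, hv2, hpv, hqv, hwv, hqpv, hpTv, hqTv, hnv⟩ := hIPQ v hv'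
    rw [hΦ, Prod.mk.injEq] at hxy
    obtain ⟨hmod, hanchor⟩ := hxy
    have hpmod : P u % N = P v % N :=
      arc (P u) (Q u) (P v) (Q v) s s' hpTu hpTv hnu hnv
        hx.2.1 hx.2.2 hy.2.1 hy.2.2 hmod
    have himod : I u % N = I v % N := by
      have e1 : I u = P u + (I u - P u) := by omega
      have e2 : I v = P v + (I v - P v) := by omega
      rw [e1, e2, ← hanchor, Nat.add_mod, Nat.add_mod (P v), hpmod]
    have hieq : I u = I v :=
      hsame (N * W') (I u) (I v) hu1 hu2 hv1 hv2 himod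
    have huv : u = v := by rw [← hiu, ← hiv, hieq]
    subst huv
    have hseq : s = s' :=
      hsame (P u) s s' hx.2.1 (by omega) hy.2.1 (by omega) hmod
    rw [hseq]
  -- assemble
  have hsum1 : ∑ u ∈ S, ∑ t ∈ Finset.Ico (P u) (Q u), g t
      = ∑ x ∈ Sig, g x.2 := by
    rw [hSig, Finset.sum_sigma]
  have hsum2 : ∑ x ∈ Sig, g x.2 = ∑ y ∈ Sig.image Φ, g y.1 := by
    rw [Finset.sum_image hΦinj]
    refine Finset.sum_congr rfl fun x hx => ?_
    rw [hΦ]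
    exact hgmod x.2
  have hsub : Sig.image Φ ⊆ (Finset.range N) ×ˢ (Finset.Ico 1 W') := by
    intro y hy
    rw [Finset.mem_image] at hy
    obtain ⟨x, hx, hxy⟩ := hy
    obtain ⟨u, s⟩ := x
    simp only [hSig, Finset.mem_sigma, Finset.mem_Ico] at hx
    have hu' := hmem u hx.1
    obtain ⟨_, _, _, hpu, _, hwu, _, _, _, _⟩ := hIPQ u hu'
    rw [← hxy]
    simp only [hΦ, Finset.mem_product, Finset.mem_range, Finset.mem_Ico]
    exact ⟨Nat.mod_lt _ hNpos, by omega, by omega⟩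
  have hsum3 : ∑ y ∈ Sig.image Φ, g y.1
      ≤ ∑ y ∈ (Finset.range N) ×ˢ (Finset.Ico 1 W'), g y.1 :=
    Finset.sum_le_sum_of_subset_of_nonneg hsub (fun y _ _ => hgnn y.1)
  have hsum4 : ∑ y ∈ (Finset.range N) ×ˢ (Finset.Ico 1 W'), g y.1
      = ((W' - 1 : ℕ) : ℝ) * ∑ t ∈ Finset.range N, g t := by
    rw [Finset.sum_product, Finset.mul_sum]
    refine Finset.sum_congr rfl fun t _ => ?_
    show ∑ _a ∈ Finset.Ico 1 W', g t = _
    rw [Finset.sum_const, Nat.card_Ico, nsmul_eq_mul]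
  -- the tour sum equals twice the tree cost
  have htour : ∑ t ∈ Finset.range N, g t = 2 * treeCost w E := by
    have h1 : ∀ t : ℕ, g t = edgeW w s(π t, π (t + 1)) := by
      intro t
      have : edgeW w s(π t, π (t + 1)) = (w (π t) (π (t + 1)) +
          w (π (t + 1)) (π t)) / 2 := rfl
      rw [this, hsymm (π (t + 1)) (π t)]
      rw [hg]
      ring
    calc ∑ t ∈ Finset.range N, g t
        = ∑ t ∈ Finset.range N, edgeW w s(π t, π (t + 1)) :=
          Finset.sum_congr rfl fun t _ => h1 t
      _ = ∑ e ∈ E, ∑ t ∈ (Finset.range N).filter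
            (fun t => s(π t, π (t + 1)) = e), edgeW w s(π t, π (t + 1)) :=
          (Finset.sum_fiberwise_of_maps_to (fun t _ => hstep t) _).symm
      _ = ∑ e ∈ E, 2 * edgeW w e := by
          refine Finset.sum_congr rfl fun e he => ?_
          have hconst : ∀ t ∈ (Finset.range N).filter
              (fun t => s(π t, π (t + 1)) = e),
              edgeW w s(π t, π (t + 1)) = edgeW w e := by
            intro t ht
            rw [Finset.mem_filter] at ht
            rw [ht.2]
          rw [Finset.sum_congr rfl hconst, Finset.sum_const, htwice e he,
            nsmul_eq_mul]
          norm_num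
      _ = 2 * treeCost w E := by
          rw [treeCost, Finset.mul_sum]
  -- final computation
  have hfinal : 2 * ∑ u ∈ S, w u (f u)
      ≤ ((W' - 1 : ℕ) : ℝ) * (2 * treeCost w E) := by
    calc 2 * ∑ u ∈ S, w u (f u) = ∑ u ∈ S, 2 * w u (f u) := by
          rw [Finset.mul_sum]
      _ ≤ ∑ u ∈ S, ∑ t ∈ Finset.Ico (P u) (Q u), g t := Finset.sum_le_sum hub
      _ = ∑ x ∈ Sig, g x.2 := hsum1
      _ = ∑ y ∈ Sig.image Φ, g y.1 := hsum2
      _ ≤ ∑ y ∈ (Finset.range N) ×ˢ (Finset.Ico 1 W'), g y.1 := hsum3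
      _ = ((W' - 1 : ℕ) : ℝ) * ∑ t ∈ Finset.range N, g t := hsum4
      _ = ((W' - 1 : ℕ) : ℝ) * (2 * treeCost w E) := by rw [htour]
  have hcast : ((W' - 1 : ℕ) : ℝ) ≤ (W : ℝ) := by
    have : W' - 1 ≤ W := by omega
    exact_mod_cast this
  have h2 : ((W' - 1 : ℕ) : ℝ) * treeCost w E ≤ (W : ℝ) * treeCost w E :=
    mul_le_mul_of_nonneg_right hcast htc
  have hring : ((W' - 1 : ℕ) : ℝ) * (2 * treeCost w E)
      = 2 * (((W' - 1 : ℕ) : ℝ) * treeCost w E) := by ring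
  linarith [hfinal, h2]
end
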